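/- In the smoothed standard protocol, fix Alice's input x, an even step t (so the t-th message is sent by Bob), and a transcript M_{t−1} of positive probability given x. Then the conditional distribution of the t-th message m_t given x and M_{t−1} satisfies Pr[m_t = m] = (1/L)·Q_t(m)/Q_{t−2}, and for every γ > 0, Pr_{m_t}[ Q_t(m_t)/Q_{t−2} ≤ γϵ/2 ] < γ. -/

import Mathlib

/-! On grid transcripts the noise step sends `m` with probability exactly `Δ(m, E)/L`, so the
probability of a transcript given the state is `∏ Δ / L^t`. This product splits into Alice's
factors, which depend on the state only through `x`, and Bob's factors `q`. Conditioning on `x`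
and `M_{t-1}`, Alice's factors cancel, and appending Bob's message `m` multiplies the
probability by `Q_t(m) / (L Q_{t-2})`; here `q_{t-1} = q_{t-2}` because message `t-1` is Alice's.
For the tail bound, every message lies on one of at most `2^b + 2L + 1` grid points, each bad
one has conditional probability at most `γϵ/(2L)`, and `(2^b + 2L + 1)ϵ < 2L` as `ϵ ≤ 1/40`. -/

open scoped Classical BigOperators

/-- States of the world: pairs `(x, y)` of `n`-bit strings. -/
abbrev St (n : ℕ) := (Fin n → Bool) × (Fin n → Bool)

variable {n : ℕ}

/-- Round `z` to the nearest multiple of `2^{-b}`, ties broken upward. -/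
noncomputable def roundb (b : ℕ) (z : ℝ) : ℝ :=
  (⌊z * 2 ^ b + 1 / 2⌋ : ℤ) * (2 : ℝ) ^ (-(b : ℤ))

/-- The (unnormalized) triangular likelihood `Δ(m, E)` of message `m` given
expectation `E`:  `1 - |m - round(E)|/ϵ` if `|m - round(E)| ≤ ϵ`, else `0`. -/
noncomputable def Dlt (ϵ : ℝ) (b : ℕ) (m E : ℝ) : ℝ :=
  if |m - roundb b E| ≤ ϵ then 1 - |m - roundb b E| / ϵ else 0

/-- Alice's knowledge cell `Ω_A(ω) = {(x, y') ∈ Ω}`. -/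
noncomputable def cellA (S : Finset (St n)) (ω : St n) : Finset (St n) :=
  S.filter fun ω' => ω'.1 = ω.1

/-- Bob's knowledge cell `Ω_B(ω) = {(x', y) ∈ Ω}`. -/
noncomputable def cellB (S : Finset (St n)) (ω : St n) : Finset (St n) :=
  S.filter fun ω' => ω'.2 = ω.2

/-- The probability (up to the constant factor `1/L` per message) of the transcript `M`
(most recent message first) given the state `ω`: the product over all messages of
`Δ(m_u, E_{sender,u-1}(ω, M_{u-1}))`, where the sender of message `u` is Alice iff `u`
is odd, and `E_{i,u}` is the sender's posterior expectation of `f`. -/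
noncomputable def lhd (S : Finset (St n)) (D f : St n → ℝ) (ϵ : ℝ) (b : ℕ) :
    List ℝ → St n → ℝ
  | [], _ => 1
  | m :: M, ω =>
    let c := if (M.length + 1) % 2 = 1 then cellA S ω else cellB S ω
    lhd S D f ϵ b M ω *
      Dlt ϵ b m ((∑ ω' ∈ c, D ω' * lhd S D f ϵ b M ω' * f ω') /
        (∑ ω' ∈ c, D ω' * lhd S D f ϵ b M ω'))

/-- Posterior expectation of `f` for the agent (`al = true` for Alice) with knowledge
cell containing `ω`, given the transcript `M` (most recent message first). -/
noncomputable def postE (S : Finset (St n)) (D f : St n → ℝ) (ϵ : ℝ) (b : ℕ)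
    (al : Bool) (M : List ℝ) (ω : St n) : ℝ :=
  (∑ ω' ∈ (if al then cellA S ω else cellB S ω), D ω' * lhd S D f ϵ b M ω' * f ω') /
  (∑ ω' ∈ (if al then cellA S ω else cellB S ω), D ω' * lhd S D f ϵ b M ω')

/-- The transcript (most recent message first) of the smoothed standard protocol after
`t` messages, on state `ω` with noise sequence `r`: the sender of message `t+1`
(Alice iff `t+1` is odd) sends `round(E) + 2^{-b}·r t`. -/
noncomputable def runT (S : Finset (St n)) (D f : St n → ℝ) (ϵ : ℝ) (b : ℕ)
    (ω : St n) (r : ℕ → ℤ) : ℕ → List ℝ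
  | 0 => []
  | t + 1 =>
    let M := runT S D f ϵ b ω r t
    (roundb b (postE S D f ϵ b (decide ((t + 1) % 2 = 1)) M ω) +
        (2 : ℝ) ^ (-(b : ℤ)) * (r t : ℝ)) :: M

/-- The triangular noise distribution on `{-L, …, L}`: `Pr[r = j] = (L - |j|)/L²`. -/
noncomputable def tri (L : ℕ) (j : ℤ) : ℝ :=
  if |j| ≤ (L : ℤ) then ((L : ℝ) - |(j : ℝ)|) / (L : ℝ) ^ 2 else 0

/-- Joint probability, over the prior `D` on states and the protocol's noise, that the
state `ω` and the transcript `M_t` after `t` messages satisfy the predicate `P`. -/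
noncomputable def jointP (S : Finset (St n)) (D f : St n → ℝ) (ϵ : ℝ) (b L : ℕ)
    (t : ℕ) (P : St n → List ℝ → Prop) : ℝ :=
  ∑ ω ∈ S, D ω *
    ∑ r ∈ Fintype.piFinset (fun _ : Fin t => Finset.Icc (-(L : ℤ)) (L : ℤ)),
      (∏ u, tri L (r u)) *
        (if P ω (runT S D f ϵ b ω (fun u => if h : u < t then r ⟨u, h⟩ else 0) t)
         then 1 else 0)

/-- The weight `q_u(Y, M_u)`: product of the triangular likelihoods of Bob's (even-step)
messages in the transcript `M` (most recent message first), evaluated at state `Y`. -/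
noncomputable def qwt (S : Finset (St n)) (D f : St n → ℝ) (ϵ : ℝ) (b : ℕ) :
    List ℝ → St n → ℝ
  | [], _ => 1
  | m :: M, Y =>
    qwt S D f ϵ b M Y *
      (if (M.length + 1) % 2 = 0 then Dlt ϵ b m (postE S D f ϵ b false M Y) else 1)

/-- `Q_u = E_{Y ~ D(·|Ω_A(x))}[q_u(Y, M_u)]`, as a function of Alice's input `x` and the
transcript `M` (most recent message first). -/
noncomputable def Qfun (S : Finset (St n)) (D f : St n → ℝ) (ϵ : ℝ) (b : ℕ)
    (x : Fin n → Bool) (M : List ℝ) : ℝ :=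
  (∑ Y ∈ S.filter (fun ω' => ω'.1 = x), D Y * qwt S D f ϵ b M Y) /
  (∑ Y ∈ S.filter (fun ω' => ω'.1 = x), D Y)

def OnGrid (b : ℕ) (m : ℝ) : Prop := ∃ k : ℤ, m = (k : ℝ) * (2 : ℝ) ^ (-(b : ℤ))

lemma onGrid_roundb_add (b : ℕ) (z : ℝ) (j : ℤ) :
    OnGrid b (roundb b z + (2 : ℝ) ^ (-(b : ℤ)) * j) :=
  ⟨⌊z * 2 ^ b + 1 / 2⌋ + j, by rw [roundb]; push_cast; ring⟩

lemma Finset.sum_piFinset_const_succ {α β : Type*} [AddCommMonoid β] {s : Finset α} {t : ℕ}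
    (F : (Fin (t + 1) → α) → β) :
    ∑ r ∈ Fintype.piFinset (fun _ : Fin (t + 1) => s), F r
      = ∑ r ∈ Fintype.piFinset (fun _ : Fin t => s), ∑ j ∈ s, F (Fin.snoc r j) := by
  have h := Finset.filter_piFinset_eq_map_snocEquiv (fun _ : Fin (t + 1) => s) (fun _ => True)
  rw [Finset.filter_true] at h
  rw [h, Finset.sum_map, Finset.sum_product_right, Finset.filter_true]
  rfl

section Protocol

variable (S : Finset (St n)) (D f : St n → ℝ) (ϵ : ℝ) (b L : ℕ)

lemma runT_congr (ω : St n) {r r' : ℕ → ℤ} {t : ℕ} (h : ∀ u < t, r u = r' u) :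
    runT S D f ϵ b ω r t = runT S D f ϵ b ω r' t := by
  induction t with
  | zero => rfl
  | succ t ih =>
    simp only [runT]
    rw [ih fun u hu => h u (Nat.lt_succ_of_lt hu), h t (Nat.lt_succ_self t)]

lemma runT_onGrid (ω : St n) (r : ℕ → ℤ) (t : ℕ) :
    ∀ m ∈ runT S D f ϵ b ω r t, OnGrid b m := by
  induction t with
  | zero => simp [runT]
  | succ t ih =>
    simp only [runT, List.mem_cons, forall_eq_or_imp]
    exact ⟨onGrid_roundb_add b _ _, ih⟩

noncomputable def transcriptProb (ω : St n) (t : ℕ) (M : List ℝ) : ℝ :=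
  ∑ r ∈ Fintype.piFinset (fun _ : Fin t => Finset.Icc (-(L : ℤ)) (L : ℤ)),
    (∏ u, tri L (r u)) *
      (if runT S D f ϵ b ω (fun u => if h : u < t then r ⟨u, h⟩ else 0) t = M then 1 else 0)

lemma transcriptProb_zero (ω : St n) (M : List ℝ) :
    transcriptProb S D f ϵ b L ω 0 M = if M = [] then 1 else 0 := by
  simp [transcriptProb, runT, eq_comm]

lemma runT_extend_snoc (ω : St n) {t : ℕ} (r : Fin t → ℤ) (j : ℤ) :
    runT S D f ϵ b ω (fun u => if h : u < t + 1 then (Fin.snoc r j : Fin (t + 1) → ℤ) ⟨u, h⟩ else 0)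
        (t + 1) =
      (roundb b (postE S D f ϵ b (decide ((t + 1) % 2 = 1))
          (runT S D f ϵ b ω (fun u => if h : u < t then r ⟨u, h⟩ else 0) t) ω) +
        (2 : ℝ) ^ (-(b : ℤ)) * j) ::
        runT S D f ϵ b ω (fun u => if h : u < t then r ⟨u, h⟩ else 0) t := by
  have hinit : runT S D f ϵ b ω
      (fun u => if h : u < t + 1 then (Fin.snoc r j : Fin (t + 1) → ℤ) ⟨u, h⟩ else 0) t =
      runT S D f ϵ b ω (fun u => if h : u < t then r ⟨u, h⟩ else 0) t :=
    runT_congr S D f ϵ b ω fun u hu => by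
      simp only [dif_pos hu, dif_pos (Nat.lt_succ_of_lt hu)]
      exact Fin.snoc_castSucc (i := ⟨u, hu⟩) ..
  simp only [runT, hinit, lt_add_one, dif_pos]
  congr
  exact Fin.snoc_last (n := t) ..

lemma transcriptProb_succ_cons (ω : St n) (t : ℕ) (m : ℝ) (M : List ℝ) :
    transcriptProb S D f ϵ b L ω (t + 1) (m :: M) =
      transcriptProb S D f ϵ b L ω t M *
        ∑ j ∈ Finset.Icc (-(L : ℤ)) (L : ℤ), tri L j *
          (if roundb b (postE S D f ϵ b (decide ((t + 1) % 2 = 1)) M ω) +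
              (2 : ℝ) ^ (-(b : ℤ)) * j = m then 1 else 0) := by
  unfold transcriptProb
  rw [Finset.sum_piFinset_const_succ, Finset.sum_mul]
  refine Finset.sum_congr rfl fun r _ => ?_
  rw [Finset.mul_sum]
  refine Finset.sum_congr rfl fun j _ => ?_
  rw [Fin.prod_univ_castSucc, runT_extend_snoc]
  simp only [Fin.snoc_castSucc, Fin.snoc_last, List.cons.injEq]
  by_cases hM : runT S D f ϵ b ω (fun u => if h : u < t then r ⟨u, h⟩ else 0) t = M
  · simp only [hM, and_true, if_true]
    ring
  · simp [hM]

end Protocol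

lemma tri_nonneg (L : ℕ) (j : ℤ) : 0 ≤ tri L j := by
  unfold tri
  split_ifs with h
  · have : |(j : ℝ)| ≤ L := by exact_mod_cast h
    exact div_nonneg (by linarith) (by positivity)
  · exact le_rfl

lemma tri_eq_zero_of_notMem {L : ℕ} {j : ℤ} (hj : j ∉ Finset.Icc (-(L : ℤ)) L) : tri L j = 0 := by
  rw [tri, if_neg]
  rwa [abs_le, ← Finset.mem_Icc]

lemma sum_tri_mul_ite_eq_Dlt {ϵ : ℝ} {b L : ℕ} (hL : (L : ℝ) = 2 ^ b * ϵ) {m : ℝ}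
    (hm : OnGrid b m) (E : ℝ) :
    ∑ j ∈ Finset.Icc (-(L : ℤ)) L,
        tri L j * (if roundb b E + (2 : ℝ) ^ (-(b : ℤ)) * j = m then 1 else 0) =
      Dlt ϵ b m E / L := by
  obtain ⟨k, rfl⟩ := hm
  set d := k - ⌊E * 2 ^ b + 1 / 2⌋
  have h2b : (0 : ℝ) < (2 : ℝ) ^ (-(b : ℤ)) := by positivity
  have hcond : ∀ j : ℤ, roundb b E + (2 : ℝ) ^ (-(b : ℤ)) * j = k * (2 : ℝ) ^ (-(b : ℤ)) ↔
      d = j := by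
    intro j
    have : roundb b E + (2 : ℝ) ^ (-(b : ℤ)) * j =
        ((⌊E * 2 ^ b + 1 / 2⌋ + j : ℤ) : ℝ) * (2 : ℝ) ^ (-(b : ℤ)) := by
      rw [roundb]; push_cast; ring
    rw [this, mul_left_inj' h2b.ne', Int.cast_inj]
    omega
  have hsum : (if d ∈ Finset.Icc (-(L : ℤ)) L then tri L d else 0) = tri L d := by
    split_ifs with h
    · rfl
    · exact (tri_eq_zero_of_notMem h).symm
  have hdist : |k * (2 : ℝ) ^ (-(b : ℤ)) - roundb b E| = |(d : ℝ)| * 2 ^ (-(b : ℤ)) := by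
    rw [roundb, ← sub_mul, abs_mul, abs_of_pos h2b, Int.cast_sub]
  have hϵ : ϵ = L * (2 : ℝ) ^ (-(b : ℤ)) := by
    rw [hL, zpow_neg, zpow_natCast]
    field_simp
  have hcast : |(d : ℝ)| ≤ L ↔ |d| ≤ (L : ℤ) := by exact_mod_cast Iff.rfl
  simp_rw [hcond, mul_ite, mul_one, mul_zero, Finset.sum_ite_eq, hsum]
  rw [tri, Dlt, hdist, hϵ]
  simp only [mul_le_mul_iff_of_pos_right h2b, mul_div_mul_right _ _ h2b.ne', hcast]
  split_ifs
  · rcases eq_or_ne (L : ℝ) 0 with h | h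
    · simp [h]
    · field_simp
  · simp

lemma Dlt_nonneg {ϵ : ℝ} (hϵ : 0 < ϵ) (b : ℕ) (m E : ℝ) : 0 ≤ Dlt ϵ b m E := by
  unfold Dlt
  split_ifs with h
  · linarith [(div_le_one hϵ).mpr h]
  · exact le_rfl

section Likelihood

variable (S : Finset (St n)) (D f : St n → ℝ) (ϵ : ℝ) (b : ℕ)

lemma lhd_cons (m : ℝ) (M : List ℝ) (ω : St n) :
    lhd S D f ϵ b (m :: M) ω =
      lhd S D f ϵ b M ω * Dlt ϵ b m (postE S D f ϵ b (decide ((M.length + 1) % 2 = 1)) M ω) := by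
  by_cases h : (M.length + 1) % 2 = 1 <;> simp [lhd, postE, h]

lemma transcriptProb_eq_lhd {L : ℕ} (hL : (L : ℝ) = 2 ^ b * ϵ) (ω : St n) {M : List ℝ}
    (hM : ∀ m ∈ M, OnGrid b m) :
    transcriptProb S D f ϵ b L ω M.length M = lhd S D f ϵ b M ω / (L : ℝ) ^ M.length := by
  induction M with
  | nil => simp [transcriptProb_zero, lhd]
  | cons m M ih =>
    rw [List.forall_mem_cons] at hM
    rw [List.length_cons, transcriptProb_succ_cons, ih hM.2, sum_tri_mul_ite_eq_Dlt hL hM.1,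
      lhd_cons, pow_succ, div_mul_div_comm]

noncomputable def aliceWt : List ℝ → St n → ℝ
  | [], _ => 1
  | m :: M, ω =>
    aliceWt M ω * (if (M.length + 1) % 2 = 1 then Dlt ϵ b m (postE S D f ϵ b true M ω) else 1)

lemma lhd_eq_aliceWt_mul_qwt (M : List ℝ) (ω : St n) :
    lhd S D f ϵ b M ω = aliceWt S D f ϵ b M ω * qwt S D f ϵ b M ω := by
  induction M with
  | nil => simp [lhd, aliceWt, qwt]
  | cons m M ih =>
    rw [lhd_cons, aliceWt, qwt, ih]
    rcases Nat.mod_two_eq_zero_or_one (M.length + 1) with h | h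
    · simp only [h, zero_ne_one, decide_false, ↓reduceIte, mul_one]
      ring
    · simp only [h, decide_true, ↓reduceIte, one_ne_zero, mul_one]
      ring

lemma aliceWt_congr (M : List ℝ) {ω ω' : St n} (h : ω.1 = ω'.1) :
    aliceWt S D f ϵ b M ω = aliceWt S D f ϵ b M ω' := by
  induction M with
  | nil => rfl
  | cons m M ih => simp only [aliceWt, ih, postE, cellA, h, if_true]

lemma aliceWt_cons_of_even {m : ℝ} {M : List ℝ} (hM : (M.length + 1) % 2 = 0) (ω : St n) :
    aliceWt S D f ϵ b (m :: M) ω = aliceWt S D f ϵ b M ω := by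
  rw [aliceWt, if_neg (by omega), mul_one]

lemma qwt_cons_of_odd {m : ℝ} {M : List ℝ} (hM : (M.length + 1) % 2 = 1) (Y : St n) :
    qwt S D f ϵ b (m :: M) Y = qwt S D f ϵ b M Y := by
  rw [qwt, if_neg (by omega), mul_one]

lemma Qfun_cons_of_odd (x : Fin n → Bool) {m : ℝ} {M : List ℝ} (hM : (M.length + 1) % 2 = 1) :
    Qfun S D f ϵ b x (m :: M) = Qfun S D f ϵ b x M := by
  simp only [Qfun, qwt_cons_of_odd S D f ϵ b hM]

variable {ϵ}

lemma lhd_nonneg (hϵ : 0 < ϵ) (M : List ℝ) (ω : St n) : 0 ≤ lhd S D f ϵ b M ω := by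
  induction M with
  | nil => simp [lhd]
  | cons m M ih => rw [lhd_cons]; exact mul_nonneg ih (Dlt_nonneg hϵ _ _ _)

lemma postE_mem_Icc (hϵ : 0 < ϵ) (hD : ∀ ω ∈ S, 0 ≤ D ω) (hf : ∀ ω, f ω ∈ Set.Icc (0 : ℝ) 1)
    (al : Bool) (M : List ℝ) (ω : St n) : postE S D f ϵ b al M ω ∈ Set.Icc (0 : ℝ) 1 := by
  set c := if al then cellA S ω else cellB S ω
  have hc : c ⊆ S := by cases al <;> exact Finset.filter_subset _ _
  have hw : ∀ ω' ∈ c, 0 ≤ D ω' * lhd S D f ϵ b M ω' :=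
    fun ω' h => mul_nonneg (hD ω' (hc h)) (lhd_nonneg S D f b hϵ M ω')
  have hnum : 0 ≤ ∑ ω' ∈ c, D ω' * lhd S D f ϵ b M ω' * f ω' :=
    Finset.sum_nonneg fun ω' h => mul_nonneg (hw ω' h) (hf ω').1
  have hle : ∑ ω' ∈ c, D ω' * lhd S D f ϵ b M ω' * f ω' ≤ ∑ ω' ∈ c, D ω' * lhd S D f ϵ b M ω' :=
    Finset.sum_le_sum fun ω' h => mul_le_of_le_one_right (hw ω' h) (hf ω').2
  exact ⟨div_nonneg hnum (hnum.trans hle), div_le_one_of_le₀ hle (hnum.trans hle)⟩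

end Likelihood

section JointProbability

variable (S : Finset (St n)) (D f : St n → ℝ) {ϵ : ℝ} {b L : ℕ}

lemma jointP_cell_eq_sum (x : Fin n → Bool) (t : ℕ) (M₁ : List ℝ) :
    jointP S D f ϵ b L t (fun ω M => ω.1 = x ∧ M = M₁) =
      ∑ ω ∈ S.filter (fun ω => ω.1 = x), D ω * transcriptProb S D f ϵ b L ω t M₁ := by
  rw [Finset.sum_filter]
  refine Finset.sum_congr rfl fun ω _ => ?_
  by_cases h : ω.1 = x <;> simp [h, transcriptProb]

lemma sum_cell_mul_qwt_eq_Qfun_mul (hD : ∀ ω ∈ S, 0 ≤ D ω) (x : Fin n → Bool) (M : List ℝ) :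
    ∑ Y ∈ S.filter (fun ω => ω.1 = x), D Y * qwt S D f ϵ b M Y =
      Qfun S D f ϵ b x M * ∑ Y ∈ S.filter (fun ω => ω.1 = x), D Y := by
  by_cases h : ∑ Y ∈ S.filter (fun ω => ω.1 = x), D Y = 0
  · rw [Finset.sum_eq_zero_iff_of_nonneg fun Y hY => hD Y (Finset.mem_filter.mp hY).1] at h
    rw [Finset.sum_eq_zero fun Y hY => by rw [h Y hY, zero_mul], Finset.sum_eq_zero h, mul_zero]
  · rw [Qfun, div_mul_cancel₀ _ h]

lemma jointP_eq_aliceWt_mul_Qfun (hD : ∀ ω ∈ S, 0 ≤ D ω) (hL : (L : ℝ) = 2 ^ b * ϵ)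
    {x : Fin n → Bool} {ω₀ : St n} (hω₀ : ω₀.1 = x) {M₁ : List ℝ} (hM₁ : ∀ m ∈ M₁, OnGrid b m) :
    jointP S D f ϵ b L M₁.length (fun ω M => ω.1 = x ∧ M = M₁) =
      aliceWt S D f ϵ b M₁ ω₀ * Qfun S D f ϵ b x M₁ *
        (∑ Y ∈ S.filter (fun ω => ω.1 = x), D Y) / (L : ℝ) ^ M₁.length := by
  have hterm : ∀ ω ∈ S.filter (fun ω => ω.1 = x),
      D ω * transcriptProb S D f ϵ b L ω M₁.length M₁ =
        aliceWt S D f ϵ b M₁ ω₀ * (D ω * qwt S D f ϵ b M₁ ω) / (L : ℝ) ^ M₁.length := by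
    intro ω hω
    rw [transcriptProb_eq_lhd S D f ϵ b hL ω hM₁, lhd_eq_aliceWt_mul_qwt,
      aliceWt_congr S D f ϵ b M₁ ((Finset.mem_filter.mp hω).2.trans hω₀.symm)]
    ring
  rw [jointP_cell_eq_sum, Finset.sum_congr rfl hterm, ← Finset.sum_div, ← Finset.mul_sum,
    sum_cell_mul_qwt_eq_Qfun_mul S D f hD, mul_assoc]

lemma jointP_cons_cons_mul_Qfun (hD : ∀ ω ∈ S, 0 ≤ D ω) (hL : (L : ℝ) = 2 ^ b * ϵ)
    (x : Fin n → Bool) {m m₁ : ℝ} {M : List ℝ} (hM : M.length % 2 = 0) (hm : OnGrid b m)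
    (hM₁ : ∀ m' ∈ m₁ :: M, OnGrid b m') :
    jointP S D f ϵ b L (M.length + 2) (fun ω M' => ω.1 = x ∧ M' = m :: m₁ :: M) *
        Qfun S D f ϵ b x M =
      jointP S D f ϵ b L (M.length + 1) (fun ω M' => ω.1 = x ∧ M' = m₁ :: M) *
        Qfun S D f ϵ b x (m :: m₁ :: M) / L := by
  have hω₀ : ((x, fun _ => false) : St n).1 = x := rfl
  have h₂ := jointP_eq_aliceWt_mul_Qfun S D f hD hL hω₀ (List.forall_mem_cons.mpr ⟨hm, hM₁⟩)
  have h₁ := jointP_eq_aliceWt_mul_Qfun S D f hD hL hω₀ hM₁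
  simp only [List.length_cons] at h₁ h₂
  rw [h₂, h₁, aliceWt_cons_of_even S D f ϵ b (by simp only [List.length_cons]; omega),
    Qfun_cons_of_odd S D f ϵ b x (by omega : (M.length + 1) % 2 = 1), pow_succ]
  ring

end JointProbability

-- Contains every message the protocol can send, since posterior expectations lie in `[0, 1]`.
noncomputable def window (b L : ℕ) : Finset ℝ :=
  (Finset.Icc (-(L : ℤ)) (2 ^ b + L)).image fun k : ℤ => (k : ℝ) * (2 : ℝ) ^ (-(b : ℤ))

lemma onGrid_of_mem_window {b L : ℕ} {m : ℝ} (hm : m ∈ window b L) : OnGrid b m := by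
  obtain ⟨k, -, rfl⟩ := Finset.mem_image.mp hm
  exact ⟨k, rfl⟩

lemma card_window_le (b L : ℕ) : ((window b L).card : ℝ) ≤ 2 ^ b + 2 * L + 1 := by
  have h : (window b L).card ≤ 2 ^ b + 2 * L + 1 := by
    refine Finset.card_image_le.trans_eq ?_
    rw [Int.card_Icc, show (2 : ℤ) ^ b = ((2 ^ b : ℕ) : ℤ) by push_cast; rfl]
    generalize 2 ^ b = c
    omega
  exact_mod_cast h

lemma card_window_mul_lt {ϵ : ℝ} {b L : ℕ} (hϵ : 0 < ϵ) (hϵ' : ϵ ≤ 1 / 40)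
    (hL : (L : ℝ) = 2 ^ b * ϵ) : ((window b L).card : ℝ) * ϵ < 2 * L := by
  have hL1 : (1 : ℝ) ≤ L := by
    have : (0 : ℝ) < L := by rw [hL]; positivity
    exact_mod_cast Nat.one_le_iff_ne_zero.mpr (by exact_mod_cast this.ne')
  nlinarith [card_window_le b L]

lemma roundb_add_mem_window {b L : ℕ} {E : ℝ} (hE : E ∈ Set.Icc (0 : ℝ) 1) {j : ℤ}
    (hj : j ∈ Finset.Icc (-(L : ℤ)) L) :
    roundb b E + (2 : ℝ) ^ (-(b : ℤ)) * j ∈ window b L := by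
  have h0 : 0 ≤ ⌊E * 2 ^ b + 1 / 2⌋ :=
    Int.floor_nonneg.mpr (by nlinarith [hE.1, pow_pos (two_pos : (0 : ℝ) < 2) b])
  have h1 : ⌊E * 2 ^ b + 1 / 2⌋ ≤ 2 ^ b := by
    rw [Int.floor_le_iff]
    push_cast
    nlinarith [hE.2, pow_pos (two_pos : (0 : ℝ) < 2) b]
  rw [Finset.mem_Icc] at hj
  refine Finset.mem_image.mpr ⟨⌊E * 2 ^ b + 1 / 2⌋ + j, Finset.mem_Icc.mpr ⟨by omega, by omega⟩, ?_⟩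
  rw [roundb]
  push_cast
  ring

section Events

variable (S : Finset (St n)) (D f : St n → ℝ) {ϵ : ℝ} {b L : ℕ}

lemma exists_runT_of_jointP_ne_zero {t : ℕ} {P : St n → List ℝ → Prop}
    (h : jointP S D f ϵ b L t P ≠ 0) : ∃ ω r, P ω (runT S D f ϵ b ω r t) := by
  obtain ⟨ω, -, hω⟩ := Finset.exists_ne_zero_of_sum_ne_zero h
  obtain ⟨r, -, hr⟩ := Finset.exists_ne_zero_of_sum_ne_zero (right_ne_zero_of_mul hω)
  by_contra hP
  exact hr (by rw [if_neg fun hp => hP ⟨ω, _, hp⟩, mul_zero])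

lemma jointP_le_sum_of_imp (hD : ∀ ω ∈ S, 0 ≤ D ω) {ι : Type*} (T : Finset ι) {t : ℕ}
    (P : St n → List ℝ → Prop) (Q : ι → St n → List ℝ → Prop)
    (h : ∀ ω ∈ S, ∀ r : ℕ → ℤ, (∀ u, r u ∈ Finset.Icc (-(L : ℤ)) L) →
      P ω (runT S D f ϵ b ω r t) → ∃ i ∈ T, Q i ω (runT S D f ϵ b ω r t)) :
    jointP S D f ϵ b L t P ≤ ∑ i ∈ T, jointP S D f ϵ b L t (Q i) := by
  unfold jointP
  rw [Finset.sum_comm]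
  refine Finset.sum_le_sum fun ω hω => ?_
  rw [← Finset.mul_sum, Finset.sum_comm]
  refine mul_le_mul_of_nonneg_left (Finset.sum_le_sum fun r hr => ?_) (hD ω hω)
  rw [← Finset.mul_sum]
  refine mul_le_mul_of_nonneg_left ?_ (Finset.prod_nonneg fun u _ => tri_nonneg L (r u))
  split_ifs with hP
  · have hr' : ∀ u, (if h : u < t then r ⟨u, h⟩ else 0) ∈ Finset.Icc (-(L : ℤ)) L := by
      intro u
      split_ifs
      · exact Fintype.mem_piFinset.mp hr _
      · simp
    obtain ⟨i, hi, hQ⟩ := h ω hω _ hr' hP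
    exact (if_pos hQ).symm.le.trans
      (Finset.single_le_sum (f := fun i => if Q i ω _ then (1 : ℝ) else 0)
        (fun i _ => by positivity) hi)
  · exact Finset.sum_nonneg fun i _ => by positivity

lemma jointP_tail_le_sum_window (hϵ : 0 < ϵ) (hD : ∀ ω ∈ S, 0 ≤ D ω)
    (hf : ∀ ω, f ω ∈ Set.Icc (0 : ℝ) 1) (x : Fin n → Bool) (t : ℕ) (M₀ : List ℝ)
    (R : List ℝ → Prop) :
    jointP S D f ϵ b L (t + 1) (fun ω M => ω.1 = x ∧ M.tail = M₀ ∧ R M) ≤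
      ∑ m ∈ (window b L).filter (fun m => R (m :: M₀)),
        jointP S D f ϵ b L (t + 1) (fun ω M => ω.1 = x ∧ M = m :: M₀) := by
  refine jointP_le_sum_of_imp S D f hD _ _ _ fun ω _ r hr ⟨hx, htail, hR⟩ => ?_
  simp only [runT, List.tail_cons] at htail hR ⊢
  rw [htail] at hR ⊢
  exact ⟨_, Finset.mem_filter.mpr ⟨roundb_add_mem_window
    (postE_mem_Icc S D f b hϵ hD hf _ _ ω) (hr t), hR⟩, hx, rfl⟩

end Events

section BobStep

variable (S : Finset (St n)) (D f : St n → ℝ) {ϵ : ℝ} {b L : ℕ} (x : Fin n → Bool)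
  {m₁ : ℝ} {M : List ℝ}

lemma jointP_div_jointP_eq_Qfun_div (hD : ∀ ω ∈ S, 0 ≤ D ω) (hL : (L : ℝ) = 2 ^ b * ϵ)
    (hM : M.length % 2 = 0)
    (hpos : 0 < jointP S D f ϵ b L (M.length + 1) (fun ω M' => ω.1 = x ∧ M' = m₁ :: M))
    {m : ℝ} (hm : OnGrid b m) :
    jointP S D f ϵ b L (M.length + 2) (fun ω M' => ω.1 = x ∧ M' = m :: m₁ :: M) /
        jointP S D f ϵ b L (M.length + 1) (fun ω M' => ω.1 = x ∧ M' = m₁ :: M) =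
      1 / L * (Qfun S D f ϵ b x (m :: m₁ :: M) / Qfun S D f ϵ b x M) := by
  have hgrid : ∀ m' ∈ m₁ :: M, OnGrid b m' := by
    obtain ⟨ω, r, -, hr⟩ := exists_runT_of_jointP_ne_zero S D f hpos.ne'
    exact hr ▸ runT_onGrid S D f ϵ b ω r _
  have hQ : Qfun S D f ϵ b x M ≠ 0 := by
    intro h0
    have hP := jointP_eq_aliceWt_mul_Qfun S D f hD hL (x := x) (ω₀ := (x, fun _ => false)) rfl hgrid
    rw [Qfun_cons_of_odd S D f ϵ b x (by omega), h0, mul_zero, zero_mul, zero_div] at hP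
    exact hpos.ne' hP
  have h := jointP_cons_cons_mul_Qfun S D f hD hL x hM hm hgrid
  field_simp
  linear_combination h

lemma jointP_Qfun_ratio_le_div_lt (hϵ : 0 < ϵ) (hϵ' : ϵ ≤ 1 / 40) (hD : ∀ ω ∈ S, 0 ≤ D ω)
    (hf : ∀ ω, f ω ∈ Set.Icc (0 : ℝ) 1) (hL : (L : ℝ) = 2 ^ b * ϵ) (hM : M.length % 2 = 0)
    (hpos : 0 < jointP S D f ϵ b L (M.length + 1) (fun ω M' => ω.1 = x ∧ M' = m₁ :: M))
    {γ : ℝ} (hγ : 0 < γ) :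
    jointP S D f ϵ b L (M.length + 2) (fun ω M' => ω.1 = x ∧ M'.tail = m₁ :: M ∧
          Qfun S D f ϵ b x M' / Qfun S D f ϵ b x M ≤ γ * ϵ / 2) /
        jointP S D f ϵ b L (M.length + 1) (fun ω M' => ω.1 = x ∧ M' = m₁ :: M) < γ := by
  set P := jointP S D f ϵ b L (M.length + 1) (fun ω M' => ω.1 = x ∧ M' = m₁ :: M)
  have hLpos : (0 : ℝ) < L := by rw [hL]; positivity
  have hbad : ∀ m ∈ (window b L).filter
      (fun m => Qfun S D f ϵ b x (m :: m₁ :: M) / Qfun S D f ϵ b x M ≤ γ * ϵ / 2),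
      jointP S D f ϵ b L (M.length + 2) (fun ω M' => ω.1 = x ∧ M' = m :: m₁ :: M) ≤
        P / L * (γ * ϵ / 2) := by
    intro m hm
    obtain ⟨hmw, hle⟩ := Finset.mem_filter.mp hm
    rw [← div_mul_cancel₀ (jointP S D f ϵ b L _ _) hpos.ne',
      jointP_div_jointP_eq_Qfun_div S D f x hD hL hM hpos (onGrid_of_mem_window hmw)]
    calc _ = P / L * (Qfun S D f ϵ b x (m :: m₁ :: M) / Qfun S D f ϵ b x M) := by ring
      _ ≤ _ := by gcongr
  rw [div_lt_iff₀ hpos]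
  calc _ ≤ _ := jointP_tail_le_sum_window S D f hϵ hD hf x (M.length + 1) (m₁ :: M)
        (fun M' => Qfun S D f ϵ b x M' / Qfun S D f ϵ b x M ≤ γ * ϵ / 2)
    _ ≤ _ := Finset.sum_le_sum hbad
    _ ≤ (window b L).card * (P / L * (γ * ϵ / 2)) := by
      rw [Finset.sum_const, nsmul_eq_mul]
      gcongr
      exact Finset.filter_subset _ _
    _ = (window b L).card * ϵ * (γ * P / (2 * L)) := by ring
    _ < 2 * L * (γ * P / (2 * L)) :=
      mul_lt_mul_of_pos_right (card_window_mul_lt hϵ hϵ' hL) (by positivity)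
    _ = γ * P := by field_simp

end BobStep

theorem stmt_13_general (n : ℕ) (S : Finset (St n))
    (D : St n → ℝ) (hD : ∀ ω ∈ S, 0 < D ω)
    (f : St n → ℝ) (hf : ∀ ω, f ω ∈ Set.Icc (0 : ℝ) 1)
    (ε : ℝ) (hε : ε ∈ Set.Ioo (0 : ℝ) 1)
    (b : ℕ) (ϵ : ℝ) (hϵlo : ε / 50 ≤ ϵ) (hϵhi : ϵ ≤ ε / 40)
    (L : ℕ) (hL : (L : ℝ) = 2 ^ b * ϵ)
    (x : Fin n → Bool) (t : ℕ) (ht : t % 2 = 0) (htpos : 0 < t)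
    (M₀ : List ℝ) (hlen : M₀.length = t - 1)
    (hpos : 0 < jointP S D f ϵ b L (t - 1) (fun ω M => ω.1 = x ∧ M = M₀)) :
    (∀ m : ℝ, (∃ k : ℤ, m = (k : ℝ) * (2 : ℝ) ^ (-(b : ℤ))) →
      jointP S D f ϵ b L t (fun ω M => ω.1 = x ∧ M = m :: M₀) /
          jointP S D f ϵ b L (t - 1) (fun ω M => ω.1 = x ∧ M = M₀) =
        (1 / (L : ℝ)) * (Qfun S D f ϵ b x (m :: M₀) / Qfun S D f ϵ b x M₀.tail)) ∧
    (∀ γ : ℝ, 0 < γ →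
      jointP S D f ϵ b L t (fun ω M => ω.1 = x ∧ M.tail = M₀ ∧
            Qfun S D f ϵ b x M / Qfun S D f ϵ b x M₀.tail ≤ γ * ϵ / 2) /
          jointP S D f ϵ b L (t - 1) (fun ω M => ω.1 = x ∧ M = M₀) < γ) := by
  have hϵ : 0 < ϵ := by linarith [hε.1]
  have hD' : ∀ ω ∈ S, 0 ≤ D ω := fun ω h => (hD ω h).le
  obtain ⟨m₁, M, rfl⟩ := List.exists_cons_of_length_pos (by omega : 0 < M₀.length)
  obtain rfl : t = M.length + 2 := by simp only [List.length_cons] at hlen; omega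
  have hM : M.length % 2 = 0 := by omega
  simp only [List.tail_cons, show M.length + 2 - 1 = M.length + 1 from rfl] at hpos ⊢
  exact ⟨fun m hm => jointP_div_jointP_eq_Qfun_div S D f x hD' hL hM hpos hm,
    fun γ hγ => jointP_Qfun_ratio_le_div_lt S D f x hϵ (by linarith [hε.2]) hD' hf hL hM
      hpos hγ⟩

/-- for even `t`, conditioned on Alice's input `x` and a
positive-probability transcript `M₀ = M_{t-1}`, the `t`-th message satisfies
`Pr[m_t = m] = (1/L)·Q_t(m)/Q_{t-2}`, and `Pr[Q_t/Q_{t-2} ≤ γϵ/2] < γ`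
("unlikely messages are unlikely"). -/
theorem stmt_13 (n : ℕ) (S : Finset (St n)) (hS : S.Nonempty)
    (D : St n → ℝ) (hD : ∀ ω ∈ S, 0 < D ω) (hD0 : ∀ ω ∉ S, D ω = 0)
    (hDsum : ∑ ω ∈ S, D ω = 1)
    (f : St n → ℝ) (hf : ∀ ω, f ω ∈ Set.Icc (0 : ℝ) 1)
    (ε : ℝ) (hε : ε ∈ Set.Ioo (0 : ℝ) 1)
    (b : ℕ) (hb : Real.logb 2 (200 / ε) ≤ (b : ℝ))
    (ϵ : ℝ) (hϵmul : ∃ k : ℤ, ϵ = (k : ℝ) * (2 : ℝ) ^ (-(b : ℤ)))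
    (hϵlo : ε / 50 ≤ ϵ) (hϵhi : ϵ ≤ ε / 40)
    (L : ℕ) (hL : (L : ℝ) = 2 ^ b * ϵ)
    (x : Fin n → Bool) (t : ℕ) (ht : t % 2 = 0) (htpos : 0 < t)
    (M₀ : List ℝ) (hlen : M₀.length = t - 1)
    (hpos : 0 < jointP S D f ϵ b L (t - 1) (fun ω M => ω.1 = x ∧ M = M₀)) :
    (∀ m : ℝ, (∃ k : ℤ, m = (k : ℝ) * (2 : ℝ) ^ (-(b : ℤ))) →
      jointP S D f ϵ b L t (fun ω M => ω.1 = x ∧ M = m :: M₀) /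
          jointP S D f ϵ b L (t - 1) (fun ω M => ω.1 = x ∧ M = M₀) =
        (1 / (L : ℝ)) * (Qfun S D f ϵ b x (m :: M₀) / Qfun S D f ϵ b x M₀.tail)) ∧
    (∀ γ : ℝ, 0 < γ →
      jointP S D f ϵ b L t (fun ω M => ω.1 = x ∧ M.tail = M₀ ∧
            Qfun S D f ϵ b x M / Qfun S D f ϵ b x M₀.tail ≤ γ * ϵ / 2) /
          jointP S D f ϵ b L (t - 1) (fun ω M => ω.1 = x ∧ M = M₀) < γ) :=
  stmt_13_general n S D hD f hf ε hε b ϵ hϵlo hϵhi L hL x t ht htpos M₀ hlen hpos
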